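/- arXiv:2312.02688 — 4 statements merged into one kernel-verified Lean document; each statement's English description precedes it below -/
import Mathlib

section
/- Let F2, F3 : closure E → ℝ be C¹ functions on the closed square E = [−1,1] × [−1,1]. Then F2 ≡ 0 and F3 ≡ 0 on E if and only if the pair (F2, F3) satisfies the system: ∂_{y2} F3 − ∂_{y3} F2 = 0 in E, ∂_{y2} F2 + ∂_{y3} F3 = 0 in E, F2(±1, y3) = 0 for all y3 ∈ [−1,1], and F3(y2, ±1) = 0 for all y2 ∈ [−1,1]. (The forward direction is trivial; for the converse, (F2, F3) satisfies a curl-free divergence-free system, so each component is harmonic, and the boundary conditions force both to vanish by the maximum principle / energy estimate.) -/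
open Set MeasureTheory Complex
open scoped Interval
open scoped ENNReal

/-- A nonneg continuous function on `[-1,1]` with zero integral vanishes. -/
lemma aux_zero_of_integral_zero {g : ℝ → ℝ} (hg : ContinuousOn g (Icc (-1:ℝ) 1))
    (hnn : ∀ x ∈ Icc (-1:ℝ) 1, 0 ≤ g x) (hI : (∫ x in (-1:ℝ)..1, g x) = 0) :
    ∀ x ∈ Icc (-1:ℝ) 1, g x = 0 := by
  intro x0 hx0
  by_contra hne
  have hpos : 0 < g x0 := lt_of_le_of_ne (hnn x0 hx0) (Ne.symm hne)
  -- continuity within Icc gives a relative neighborhood where g > g x0 / 2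
  have hc := hg x0 hx0
  have hev : ∀ᶠ x in nhdsWithin x0 (Icc (-1:ℝ) 1), g x0 / 2 < g x :=
    hc (Ioi_mem_nhds (by linarith) : Ioi (g x0 / 2) ∈ nhds (g x0))
  rw [Filter.eventually_iff, mem_nhdsWithin] at hev
  obtain ⟨U, hUo, hx0U, hU⟩ := hev
  obtain ⟨δ, hδ, hball⟩ := Metric.isOpen_iff.1 hUo x0 hx0U
  -- an honest open subinterval of (-1,1) inside the ball
  set c : ℝ := max (-1) (x0 - δ/2) with hc'
  set d : ℝ := min 1 (x0 + δ/2) with hd'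
  have hcd : c < d := by
    rcases hx0 with ⟨h1, h2⟩
    simp only [hc', hd', lt_min_iff, max_lt_iff]
    constructor
    · constructor <;> [linarith; linarith]
    · constructor <;> [linarith; linarith]
  have hsub : Ioo c d ⊆ Icc (-1:ℝ) 1 := fun x hx =>
    ⟨le_of_lt (lt_of_le_of_lt (le_max_left _ _) hx.1),
     le_of_lt (lt_of_lt_of_le hx.2 (min_le_left _ _))⟩
  have hsubball : Ioo c d ⊆ Metric.ball x0 δ := by
    intro x hx
    have h1 : x0 - δ/2 ≤ c := le_max_right _ _
    have h2 : d ≤ x0 + δ/2 := min_le_right _ _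
    have := hx.1; have := hx.2
    simp only [Metric.mem_ball, Real.dist_eq, abs_lt]
    constructor <;> linarith
  have hgt : ∀ x ∈ Ioo c d, g x0 / 2 < g x := fun x hx =>
    hU ⟨hball (hsubball hx), hsub hx⟩
  -- integral over Ioc (-1) 1 is positive
  have hInt : IntegrableOn g (Ioc (-1:ℝ) 1) := (hg.integrableOn_Icc).mono_set Ioc_subset_Icc_self
  have hae : 0 ≤ᵐ[volume.restrict (Ioc (-1:ℝ) 1)] g := by
    filter_upwards [ae_restrict_mem measurableSet_Ioc] with x hx
    exact hnn x (Ioc_subset_Icc_self hx)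
  have hposint : 0 < ∫ x in Ioc (-1:ℝ) 1, g x := by
    rw [setIntegral_pos_iff_support_of_nonneg_ae hae hInt]
    have hsub2 : Ioo c d ⊆ Function.support g ∩ Ioc (-1:ℝ) 1 := by
      intro x hx
      have hm : x ∈ Ioc (-1:ℝ) 1 :=
        ⟨lt_of_le_of_lt (le_max_left _ _) hx.1, le_of_lt (lt_of_lt_of_le hx.2 (min_le_left _ _))⟩
      refine ⟨fun h => ?_, hm⟩
      have := hgt x hx; rw [h] at this; linarith
    have h1 : (0:ℝ≥0∞) < volume (Ioo c d) := by
      rw [Real.volume_Ioo]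
      exact ENNReal.ofReal_pos.2 (sub_pos.2 hcd)
    exact lt_of_lt_of_le h1 (measure_mono hsub2)
  rw [intervalIntegral.integral_of_le (by norm_num : (-1:ℝ) ≤ 1)] at hI
  exact absurd hI (ne_of_gt hposint)



/-- Partial derivative in the first variable of a function on `ℝ × ℝ`. -/
noncomputable def pdx (f : ℝ × ℝ → ℝ) (p : ℝ × ℝ) : ℝ :=
  deriv (fun t => f (t, p.2)) p.1

/-- Partial derivative in the second variable of a function on `ℝ × ℝ`. -/
noncomputable def pdy (f : ℝ × ℝ → ℝ) (p : ℝ × ℝ) : ℝ :=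
  deriv (fun t => f (p.1, t)) p.2

theorem stmt1_converse (F2 F3 : ℝ × ℝ → ℝ)
    (hF2 : ContDiffOn ℝ 1 F2 (Icc (-1 : ℝ) 1 ×ˢ Icc (-1 : ℝ) 1))
    (hF3 : ContDiffOn ℝ 1 F3 (Icc (-1 : ℝ) 1 ×ˢ Icc (-1 : ℝ) 1))
    (hsys : ∀ y ∈ Ioo (-1 : ℝ) 1 ×ˢ Ioo (-1 : ℝ) 1,
          pdx F3 y - pdy F2 y = 0 ∧ pdx F2 y + pdy F3 y = 0)
    (hbc2 : ∀ y3 ∈ Icc (-1 : ℝ) 1, F2 (1, y3) = 0 ∧ F2 (-1, y3) = 0)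
    (hbc3 : ∀ y2 ∈ Icc (-1 : ℝ) 1, F3 (y2, 1) = 0 ∧ F3 (y2, -1) = 0) :
    ∀ y ∈ Icc (-1 : ℝ) 1 ×ˢ Icc (-1 : ℝ) 1, F2 y = 0 ∧ F3 y = 0 := by
  set S := Icc (-1 : ℝ) 1 ×ˢ Icc (-1 : ℝ) 1 with hS
  set f : ℂ → ℂ := fun w => (F2 (w.re, w.im) : ℂ) - Complex.I * (F3 (w.re, w.im) : ℂ) with hf
  -- differentiability of f
  have hdiffat : ∀ G : ℝ × ℝ → ℝ, ContDiffOn ℝ 1 G S → ∀ p ∈ Ioo (-1:ℝ) 1 ×ˢ Ioo (-1:ℝ) 1,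
      HasFDerivAt G (fderiv ℝ G p) p ∧ pdx G p = fderiv ℝ G p (1, 0) ∧
      pdy G p = fderiv ℝ G p (0, 1) := by
    intro G hG p hp
    have hnh : S ∈ nhds p :=
      Filter.mem_of_superset (((isOpen_Ioo).prod (isOpen_Ioo)).mem_nhds hp)
        (prod_mono Ioo_subset_Icc_self Ioo_subset_Icc_self)
    have hd : DifferentiableAt ℝ G p :=
      ((hG.differentiableOn one_ne_zero) p (mem_of_mem_nhds hnh)).differentiableAt hnh
    refine ⟨hd.hasFDerivAt, ?_, ?_⟩
    · have h1 : HasDerivAt (fun t => (t, p.2)) ((1:ℝ), (0:ℝ)) p.1 :=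
        HasDerivAt.prodMk (hasDerivAt_id p.1) (hasDerivAt_const p.1 p.2)
      exact (hd.hasFDerivAt.comp_hasDerivAt p.1 h1).deriv
    · have h1 : HasDerivAt (fun t => (p.1, t)) ((0:ℝ), (1:ℝ)) p.2 :=
        HasDerivAt.prodMk (hasDerivAt_const p.2 p.1) (hasDerivAt_id p.2)
      exact (hd.hasFDerivAt.comp_hasDerivAt p.2 h1).deriv
  have hfd : ∀ z ∈ Ioo (-1:ℝ) 1 ×ℂ Ioo (-1:ℝ) 1, DifferentiableAt ℂ f z := by
    intro z hz
    rw [mem_reProdIm] at hz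
    have hzT : (z.re, z.im) ∈ Ioo (-1:ℝ) 1 ×ˢ Ioo (-1:ℝ) 1 := ⟨hz.1, hz.2⟩
    obtain ⟨hA, hA1, hA2⟩ := hdiffat F2 hF2 _ hzT
    obtain ⟨hB, hB1, hB2⟩ := hdiffat F3 hF3 _ hzT
    obtain ⟨hcr1', hcr2'⟩ := hsys _ hzT
    set A := fderiv ℝ F2 (z.re, z.im)
    set B := fderiv ℝ F3 (z.re, z.im)
    have hcr1 : B (1,0) = A (0,1) := by rw [← hA2, ← hB1]; linarith
    have hcr2 : B (0,1) = - A (1,0) := by rw [← hA1, ← hB2]; linarith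
    have : HasDerivAt f ((A (1,0) : ℂ) - Complex.I * (B (1,0) : ℂ)) z := by
      set J : ℂ →L[ℝ] ℝ × ℝ := Complex.reCLM.prod Complex.imCLM with hJ
      have hJd : HasFDerivAt (fun w : ℂ => (w.re, w.im)) J z := J.hasFDerivAt
      have h2 : HasFDerivAt (fun w : ℂ => F2 (w.re, w.im)) (A.comp J) z := hA.comp z hJd
      have h3 : HasFDerivAt (fun w : ℂ => F3 (w.re, w.im)) (B.comp J) z := hB.comp z hJd
      have h2' : HasFDerivAt (fun w : ℂ => (F2 (w.re, w.im) : ℂ))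
          (Complex.ofRealCLM.comp (A.comp J)) z := Complex.ofRealCLM.hasFDerivAt.comp z h2
      have h3' : HasFDerivAt (fun w : ℂ => Complex.I * (F3 (w.re, w.im) : ℂ))
          (Complex.I • (Complex.ofRealCLM.comp (B.comp J))) z :=
        (Complex.ofRealCLM.hasFDerivAt.comp z h3).const_mul Complex.I
      have hM : HasFDerivAt f
          (Complex.ofRealCLM.comp (A.comp J) - Complex.I • (Complex.ofRealCLM.comp (B.comp J))) z :=
        h2'.sub h3'
      rw [hasDerivAt_iff_hasFDerivAt]
      apply hasFDerivAt_of_restrictScalars ℝ hM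
      apply ContinuousLinearMap.ext
      intro w
      have hw : (w.re, w.im) = w.re • ((1:ℝ),(0:ℝ)) + w.im • ((0:ℝ),(1:ℝ)) := by
        simp [Prod.ext_iff]
      have hAw : A (w.re, w.im) = w.re * A (1,0) + w.im * A (0,1) := by
        rw [hw, map_add, A.map_smul, A.map_smul]; simp [smul_eq_mul]
      have hBw : B (w.re, w.im) = w.re * B (1,0) + w.im * B (0,1) := by
        rw [hw, map_add, B.map_smul, B.map_smul]; simp [smul_eq_mul]
      simp only [ContinuousLinearMap.coe_restrictScalars', ContinuousLinearMap.smulRight_apply,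
        ContinuousLinearMap.one_apply, ContinuousLinearMap.coe_sub', Pi.sub_apply,
        ContinuousLinearMap.coe_comp', Function.comp_apply, ContinuousLinearMap.coe_smul',
        Pi.smul_apply, hJ, ContinuousLinearMap.prod_apply, Complex.reCLM_apply, Complex.imCLM_apply,
        Complex.ofRealCLM_apply, smul_eq_mul]
      rw [hAw, hBw, hcr1, hcr2]
      rw [← Complex.re_add_im w]
      push_cast
      simp [Complex.ext_iff]
      try constructor
      all_goals ring
    exact this.differentiableAt
  -- continuity of f on the closed rectangle
  have hmapsto : MapsTo (fun z : ℂ => (z.re, z.im)) (Icc (-1:ℝ) 1 ×ℂ Icc (-1:ℝ) 1) S := by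
    intro z hz; rw [mem_reProdIm] at hz; exact ⟨hz.1, hz.2⟩
  have hfc : ContinuousOn f (Icc (-1:ℝ) 1 ×ℂ Icc (-1:ℝ) 1) := by
    have hproj : Continuous fun z : ℂ => (z.re, z.im) := continuous_re.prodMk continuous_im
    have h1 : ContinuousOn (fun z : ℂ => F2 (z.re, z.im)) (Icc (-1:ℝ) 1 ×ℂ Icc (-1:ℝ) 1) :=
      hF2.continuousOn.comp hproj.continuousOn hmapsto
    have h2 : ContinuousOn (fun z : ℂ => F3 (z.re, z.im)) (Icc (-1:ℝ) 1 ×ℂ Icc (-1:ℝ) 1) :=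
      hF3.continuousOn.comp hproj.continuousOn hmapsto
    exact (Complex.continuous_ofReal.comp_continuousOn h1).sub
      (continuousOn_const.mul (Complex.continuous_ofReal.comp_continuousOn h2))
  set u : ℂ → ℂ := fun z => z * (f z)^2 with hu
  have hrect : [[((⟨-1,-1⟩:ℂ)).re, ((⟨1,1⟩:ℂ)).re]] ×ℂ [[((⟨-1,-1⟩:ℂ)).im, ((⟨1,1⟩:ℂ)).im]]
      = Icc (-1:ℝ) 1 ×ℂ Icc (-1:ℝ) 1 := by
    norm_num [uIcc_of_le]
  have Hc : ContinuousOn u ([[((⟨-1,-1⟩:ℂ)).re, ((⟨1,1⟩:ℂ)).re]] ×ℂ [[((⟨-1,-1⟩:ℂ)).im, ((⟨1,1⟩:ℂ)).im]]) := by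
    rw [hrect]
    exact (continuous_id.continuousOn).mul (hfc.pow 2)
  have Hd : DifferentiableOn ℂ u
      (Ioo (min ((⟨-1,-1⟩:ℂ)).re ((⟨1,1⟩:ℂ)).re) (max ((⟨-1,-1⟩:ℂ)).re ((⟨1,1⟩:ℂ)).re) ×ℂ
       Ioo (min ((⟨-1,-1⟩:ℂ)).im ((⟨1,1⟩:ℂ)).im) (max ((⟨-1,-1⟩:ℂ)).im ((⟨1,1⟩:ℂ)).im)) := by
    have : (Ioo (min ((⟨-1,-1⟩:ℂ)).re ((⟨1,1⟩:ℂ)).re) (max ((⟨-1,-1⟩:ℂ)).re ((⟨1,1⟩:ℂ)).re) ×ℂ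
       Ioo (min ((⟨-1,-1⟩:ℂ)).im ((⟨1,1⟩:ℂ)).im) (max ((⟨-1,-1⟩:ℂ)).im ((⟨1,1⟩:ℂ)).im))
        = Ioo (-1:ℝ) 1 ×ℂ Ioo (-1:ℝ) 1 := by norm_num
    rw [this]
    intro z hz
    exact (differentiableAt_id.mul ((hfd z hz).pow 2)).differentiableWithinAt
  have E0 := Complex.integral_boundary_rect_eq_zero_of_continuousOn_of_differentiableOn u
    (⟨-1,-1⟩:ℂ) (⟨1,1⟩:ℂ) Hc Hd
  rw [hrect] at Hc
  have E0' : (∫ x in (-1:ℝ)..1, u (↑x + ↑(-1:ℝ) * Complex.I)) -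
      (∫ x in (-1:ℝ)..1, u (↑x + ↑(1:ℝ) * Complex.I)) +
      Complex.I • (∫ y in (-1:ℝ)..1, u (↑(1:ℝ) + ↑y * Complex.I)) -
      Complex.I • (∫ y in (-1:ℝ)..1, u (↑(-1:ℝ) + ↑y * Complex.I)) = 0 := E0
  -- continuity of the four boundary integrands
  have hline : ∀ g : ℝ → ℂ, Continuous g → (MapsTo g (Icc (-1:ℝ) 1) (Icc (-1:ℝ) 1 ×ℂ Icc (-1:ℝ) 1)) →
      IntervalIntegrable (fun t => u (g t)) volume (-1:ℝ) 1 := by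
    intro g hg hmt
    apply ContinuousOn.intervalIntegrable
    rw [uIcc_of_le (by norm_num : (-1:ℝ) ≤ 1)]
    exact Hc.comp hg.continuousOn hmt
  have hmem : ∀ s t : ℝ, s ∈ Icc (-1:ℝ) 1 → t ∈ Icc (-1:ℝ) 1 →
      (↑s + ↑t * Complex.I) ∈ (Icc (-1:ℝ) 1 ×ℂ Icc (-1:ℝ) 1) := by
    intro s t hs ht
    rw [mem_reProdIm]
    simp [hs, ht]
  have hint1 : IntervalIntegrable (fun x : ℝ => u (↑x + ↑(-1:ℝ) * Complex.I)) volume (-1:ℝ) 1 :=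
    hline _ (by fun_prop) (fun x hx => hmem x (-1) hx (by norm_num))
  have hint2 : IntervalIntegrable (fun x : ℝ => u (↑x + ↑(1:ℝ) * Complex.I)) volume (-1:ℝ) 1 :=
    hline _ (by fun_prop) (fun x hx => hmem x 1 hx (by norm_num))
  have hint3 : IntervalIntegrable (fun y : ℝ => u (↑(1:ℝ) + ↑y * Complex.I)) volume (-1:ℝ) 1 :=
    hline _ (by fun_prop) (fun y hy => hmem 1 y (by norm_num) hy)
  have hint4 : IntervalIntegrable (fun y : ℝ => u (↑(-1:ℝ) + ↑y * Complex.I)) volume (-1:ℝ) 1 :=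
    hline _ (by fun_prop) (fun y hy => hmem (-1) y (by norm_num) hy)
  -- pointwise values of the boundary integrands
  have hval1 : EqOn (fun x : ℝ => (u (↑x + ↑(-1:ℝ) * Complex.I)).im)
      (fun x : ℝ => -((F2 (x, -1))^2)) [[(-1:ℝ), 1]] := by
    intro x hx
    rw [uIcc_of_le (by norm_num : (-1:ℝ) ≤ 1)] at hx
    have h0 : F3 (x, -1) = 0 := (hbc3 x hx).2
    simp [hu, hf, h0, ← Complex.ofReal_pow, Complex.I_sq, Complex.mul_im, Complex.mul_re]
    try ring
    try { rw [Complex.I_sq]; push_cast; simp [← Complex.ofReal_pow] }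
  have hval2 : EqOn (fun x : ℝ => (u (↑x + ↑(1:ℝ) * Complex.I)).im)
      (fun x : ℝ => ((F2 (x, 1))^2)) [[(-1:ℝ), 1]] := by
    intro x hx
    rw [uIcc_of_le (by norm_num : (-1:ℝ) ≤ 1)] at hx
    have h0 : F3 (x, 1) = 0 := (hbc3 x hx).1
    simp [hu, hf, h0, ← Complex.ofReal_pow, Complex.I_sq, Complex.mul_im, Complex.mul_re]
    try ring
    try { rw [Complex.I_sq]; push_cast; simp [← Complex.ofReal_pow] }
  have hval3 : EqOn (fun y : ℝ => (u (↑(1:ℝ) + ↑y * Complex.I)).re)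
      (fun y : ℝ => -((F3 (1, y))^2)) [[(-1:ℝ), 1]] := by
    intro y hy
    rw [uIcc_of_le (by norm_num : (-1:ℝ) ≤ 1)] at hy
    have h0 : F2 (1, y) = 0 := (hbc2 y hy).1
    simp [hu, hf, h0, ← Complex.ofReal_pow, Complex.I_sq, Complex.mul_im, Complex.mul_re]
    try ring
    try { rw [Complex.I_sq]; push_cast; simp [← Complex.ofReal_pow] }
  have hval4 : EqOn (fun y : ℝ => (u (↑(-1:ℝ) + ↑y * Complex.I)).re)
      (fun y : ℝ => ((F3 (-1, y))^2)) [[(-1:ℝ), 1]] := by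
    intro y hy
    rw [uIcc_of_le (by norm_num : (-1:ℝ) ≤ 1)] at hy
    have h0 : F2 (-1, y) = 0 := (hbc2 y hy).2
    simp [hu, hf, h0, ← Complex.ofReal_pow, Complex.I_sq, Complex.mul_im, Complex.mul_re]
    try ring
    try { rw [Complex.I_sq]; push_cast; simp [← Complex.ofReal_pow] }
  -- take imaginary parts of the Cauchy identity
  have him1 : (∫ x in (-1:ℝ)..1, u (↑x + ↑(-1:ℝ) * Complex.I)).im
      = -∫ x in (-1:ℝ)..1, (F2 (x, -1))^2 := by
    rw [← Complex.imCLM_apply, ← ContinuousLinearMap.intervalIntegral_comp_comm _ hint1]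
    rw [← intervalIntegral.integral_neg]
    exact intervalIntegral.integral_congr hval1
  have him2 : (∫ x in (-1:ℝ)..1, u (↑x + ↑(1:ℝ) * Complex.I)).im
      = ∫ x in (-1:ℝ)..1, (F2 (x, 1))^2 := by
    rw [← Complex.imCLM_apply, ← ContinuousLinearMap.intervalIntegral_comp_comm _ hint2]
    exact intervalIntegral.integral_congr hval2
  have hre3 : (∫ y in (-1:ℝ)..1, u (↑(1:ℝ) + ↑y * Complex.I)).re
      = -∫ y in (-1:ℝ)..1, (F3 (1, y))^2 := by
    rw [← Complex.reCLM_apply, ← ContinuousLinearMap.intervalIntegral_comp_comm _ hint3]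
    rw [← intervalIntegral.integral_neg]
    exact intervalIntegral.integral_congr hval3
  have hre4 : (∫ y in (-1:ℝ)..1, u (↑(-1:ℝ) + ↑y * Complex.I)).re
      = ∫ y in (-1:ℝ)..1, (F3 (-1, y))^2 := by
    rw [← Complex.reCLM_apply, ← ContinuousLinearMap.intervalIntegral_comp_comm _ hint4]
    exact intervalIntegral.integral_congr hval4
  have hIm : ((∫ x in (-1:ℝ)..1, u (↑x + ↑(-1:ℝ) * Complex.I)) -
      (∫ x in (-1:ℝ)..1, u (↑x + ↑(1:ℝ) * Complex.I)) +
      Complex.I • (∫ y in (-1:ℝ)..1, u (↑(1:ℝ) + ↑y * Complex.I)) -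
      Complex.I • (∫ y in (-1:ℝ)..1, u (↑(-1:ℝ) + ↑y * Complex.I))).im = 0 := by
    rw [E0']; rfl
  rw [Complex.sub_im, Complex.add_im, Complex.sub_im] at hIm
  simp only [smul_eq_mul, Complex.mul_im, Complex.I_re, Complex.I_im, zero_mul, one_mul,
    zero_add] at hIm
  rw [him1, him2, hre3, hre4] at hIm
  -- the four nonnegative integrals all vanish
  have hnn1 : (0:ℝ) ≤ ∫ x in (-1:ℝ)..1, (F2 (x, -1))^2 :=
    intervalIntegral.integral_nonneg (by norm_num) (fun t _ => sq_nonneg _)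
  have hnn2 : (0:ℝ) ≤ ∫ x in (-1:ℝ)..1, (F2 (x, 1))^2 :=
    intervalIntegral.integral_nonneg (by norm_num) (fun t _ => sq_nonneg _)
  have hnn3 : (0:ℝ) ≤ ∫ y in (-1:ℝ)..1, (F3 (1, y))^2 :=
    intervalIntegral.integral_nonneg (by norm_num) (fun t _ => sq_nonneg _)
  have hnn4 : (0:ℝ) ≤ ∫ y in (-1:ℝ)..1, (F3 (-1, y))^2 :=
    intervalIntegral.integral_nonneg (by norm_num) (fun t _ => sq_nonneg _)
  have hz1 : (∫ x in (-1:ℝ)..1, (F2 (x, -1))^2) = 0 := by linarith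
  have hz2 : (∫ x in (-1:ℝ)..1, (F2 (x, 1))^2) = 0 := by linarith
  have hz3 : (∫ y in (-1:ℝ)..1, (F3 (1, y))^2) = 0 := by linarith
  have hz4 : (∫ y in (-1:ℝ)..1, (F3 (-1, y))^2) = 0 := by linarith
  -- hence the boundary values vanish pointwise
  have hcontline : ∀ (G : ℝ × ℝ → ℝ), ContinuousOn G S → ∀ g : ℝ → ℝ × ℝ, Continuous g →
      (MapsTo g (Icc (-1:ℝ) 1) S) → ContinuousOn (fun t => (G (g t))^2) (Icc (-1:ℝ) 1) := by
    intro G hG g hg hmt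
    exact (hG.comp hg.continuousOn hmt).pow 2
  have hmtS : ∀ c : ℝ, c ∈ Icc (-1:ℝ) 1 →
      (MapsTo (fun t : ℝ => (t, c)) (Icc (-1:ℝ) 1) S ∧
       MapsTo (fun t : ℝ => (c, t)) (Icc (-1:ℝ) 1) S) :=
    fun c hc => ⟨fun t ht => ⟨ht, hc⟩, fun t ht => ⟨hc, ht⟩⟩
  have hB1 : ∀ x ∈ Icc (-1:ℝ) 1, F2 (x, -1) = 0 := by
    intro x hx
    have := aux_zero_of_integral_zero
      (hcontline F2 hF2.continuousOn _ (by fun_prop) (hmtS (-1) (by norm_num)).1)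
      (fun t _ => sq_nonneg _) hz1 x hx
    exact pow_eq_zero_iff (by norm_num) |>.1 this
  have hB2 : ∀ x ∈ Icc (-1:ℝ) 1, F2 (x, 1) = 0 := by
    intro x hx
    have := aux_zero_of_integral_zero
      (hcontline F2 hF2.continuousOn _ (by fun_prop) (hmtS 1 (by norm_num)).1)
      (fun t _ => sq_nonneg _) hz2 x hx
    exact pow_eq_zero_iff (by norm_num) |>.1 this
  have hB3 : ∀ y ∈ Icc (-1:ℝ) 1, F3 (1, y) = 0 := by
    intro y hy
    have := aux_zero_of_integral_zero
      (hcontline F3 hF3.continuousOn _ (by fun_prop) (hmtS 1 (by norm_num)).2)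
      (fun t _ => sq_nonneg _) hz3 y hy
    exact pow_eq_zero_iff (by norm_num) |>.1 this
  have hB4 : ∀ y ∈ Icc (-1:ℝ) 1, F3 (-1, y) = 0 := by
    intro y hy
    have := aux_zero_of_integral_zero
      (hcontline F3 hF3.continuousOn _ (by fun_prop) (hmtS (-1) (by norm_num)).2)
      (fun t _ => sq_nonneg _) hz4 y hy
    exact pow_eq_zero_iff (by norm_num) |>.1 this
  -- f vanishes on the whole boundary of the square
  set U : Set ℂ := Ioo (-1:ℝ) 1 ×ℂ Ioo (-1:ℝ) 1 with hU
  have hclosure : closure U = Icc (-1:ℝ) 1 ×ℂ Icc (-1:ℝ) 1 := by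
    rw [hU, Complex.closure_reProdIm, closure_Ioo (by norm_num : (-1:ℝ) ≠ 1)]
  have hfront : EqOn f (fun _ => (0:ℂ)) (frontier U) := by
    intro z hz
    rw [hU, Complex.frontier_reProdIm, closure_Ioo (by norm_num : (-1:ℝ) ≠ 1),
      frontier_Ioo (by norm_num : (-1:ℝ) < 1)] at hz
    have hzero : F2 (z.re, z.im) = 0 ∧ F3 (z.re, z.im) = 0 := by
      rcases hz with h | h
      · rw [mem_reProdIm] at h
        have h2 := h.2
        simp only [mem_insert_iff, mem_singleton_iff] at h2
        rcases h2 with h2 | h2 <;> rw [h2]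
        · exact ⟨hB1 z.re h.1, (hbc3 z.re h.1).2⟩
        · exact ⟨hB2 z.re h.1, (hbc3 z.re h.1).1⟩
      · rw [mem_reProdIm] at h
        have h1 := h.1
        simp only [mem_insert_iff, mem_singleton_iff] at h1
        rcases h1 with h1 | h1 <;> rw [h1]
        · exact ⟨(hbc2 z.im h.2).2, hB4 z.im h.2⟩
        · exact ⟨(hbc2 z.im h.2).1, hB3 z.im h.2⟩
    simp [hf, hzero.1, hzero.2]
  -- maximum principle
  have hbdd : Bornology.IsBounded U := by
    have hsubball : U ⊆ Metric.closedBall (0:ℂ) 2 := by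
        intro z hz
        rw [hU, mem_reProdIm] at hz
        have h1 : |z.re| ≤ 1 := abs_le.2 ⟨le_of_lt hz.1.1, le_of_lt hz.1.2⟩
        have h2 : |z.im| ≤ 1 := abs_le.2 ⟨le_of_lt hz.2.1, le_of_lt hz.2.2⟩
        have := Complex.norm_le_abs_re_add_abs_im z
        simp only [Metric.mem_closedBall, Complex.dist_eq, sub_zero]
        calc ‖z‖ ≤ |z.re| + |z.im| := this
          _ ≤ 2 := by linarith
    exact Metric.isBounded_closedBall.subset hsubball
  have hdcc : DiffContOnCl ℂ f U := by
    refine ⟨fun z hz => (hfd z hz).differentiableWithinAt, ?_⟩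
    rw [hclosure]; exact hfc
  have hEq : EqOn f (fun _ => (0:ℂ)) (closure U) :=
    Complex.eqOn_closure_of_eqOn_frontier hbdd hdcc (diffContOnCl_const) hfront
  -- conclude
  intro y hy
  have hyU : (⟨y.1, y.2⟩ : ℂ) ∈ closure U := by
    rw [hclosure, mem_reProdIm]
    exact ⟨hy.1, hy.2⟩
  have := hEq hyU
  simp only [hf] at this
  have hyy : ((⟨y.1, y.2⟩ : ℂ).re, (⟨y.1, y.2⟩ : ℂ).im) = y := rfl
  rw [hyy] at this
  constructor
  · have := congrArg Complex.re this
    simpa using this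
  · have := congrArg Complex.im this
    simpa using this


/-- Lemma 2.2: for `C¹` functions `F2, F3` on the closed square
`[-1,1] × [-1,1]`, vanishing of `F2, F3` is equivalent to solving the
curl-free, divergence-free system with the partial boundary conditions
`F2(±1, y3) = 0`, `F3(y2, ±1) = 0`. -/
theorem stmt1 (F2 F3 : ℝ × ℝ → ℝ)
    (hF2 : ContDiffOn ℝ 1 F2 (Icc (-1 : ℝ) 1 ×ˢ Icc (-1 : ℝ) 1))
    (hF3 : ContDiffOn ℝ 1 F3 (Icc (-1 : ℝ) 1 ×ˢ Icc (-1 : ℝ) 1)) :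
    (∀ y ∈ Icc (-1 : ℝ) 1 ×ˢ Icc (-1 : ℝ) 1, F2 y = 0 ∧ F3 y = 0) ↔
      ((∀ y ∈ Ioo (-1 : ℝ) 1 ×ˢ Ioo (-1 : ℝ) 1,
          pdx F3 y - pdy F2 y = 0 ∧ pdx F2 y + pdy F3 y = 0) ∧
        (∀ y3 ∈ Icc (-1 : ℝ) 1, F2 (1, y3) = 0 ∧ F2 (-1, y3) = 0) ∧
        (∀ y2 ∈ Icc (-1 : ℝ) 1, F3 (y2, 1) = 0 ∧ F3 (y2, -1) = 0)) := by
  constructor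
  · intro hz
    refine ⟨?_, ?_, ?_⟩
    · intro y hy
      have hdx : ∀ G : ℝ × ℝ → ℝ, (∀ y ∈ Icc (-1:ℝ) 1 ×ˢ Icc (-1:ℝ) 1, G y = 0) → pdx G y = 0 := by
        intro G hG
        have h : (fun t => G (t, y.2)) =ᶠ[nhds y.1] fun _ => (0:ℝ) := by
          filter_upwards [Ioo_mem_nhds hy.1.1 hy.1.2] with t ht
          exact hG (t, y.2) ⟨Ioo_subset_Icc_self ht, Ioo_subset_Icc_self hy.2⟩
        simp [pdx, h.deriv_eq]
      have hdy : ∀ G : ℝ × ℝ → ℝ, (∀ y ∈ Icc (-1:ℝ) 1 ×ˢ Icc (-1:ℝ) 1, G y = 0) → pdy G y = 0 := by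
        intro G hG
        have h : (fun t => G (y.1, t)) =ᶠ[nhds y.2] fun _ => (0:ℝ) := by
          filter_upwards [Ioo_mem_nhds hy.2.1 hy.2.2] with t ht
          exact hG (y.1, t) ⟨Ioo_subset_Icc_self hy.1, Ioo_subset_Icc_self ht⟩
        simp [pdy, h.deriv_eq]
      constructor
      · rw [hdx F3 (fun p hp => (hz p hp).2), hdy F2 (fun p hp => (hz p hp).1)]; ring
      · rw [hdx F2 (fun p hp => (hz p hp).1), hdy F3 (fun p hp => (hz p hp).2)]; ring
    · intro y3 hy3
      exact ⟨(hz (1, y3) ⟨right_mem_Icc.2 (by norm_num), hy3⟩).1,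
        (hz (-1, y3) ⟨left_mem_Icc.2 (by norm_num), hy3⟩).1⟩
    · intro y2 hy2
      exact ⟨(hz (y2, 1) ⟨hy2, right_mem_Icc.2 (by norm_num)⟩).2,
        (hz (y2, -1) ⟨hy2, left_mem_Icc.2 (by norm_num)⟩).2⟩
  · rintro ⟨hsys, hbc2, hbc3⟩
    exact stmt1_converse F2 F3 hF2 hF3 hsys hbc2 hbc3
end

section
/- Let u = (u₁,u₂,u₃) be a C¹ velocity field with u₁ > 0, B a C¹ function, and ω = curl u = (ω₁,ω₂,ω₃). Suppose u₁ω₃ − u₃ω₁ + ∂₂B = 0 and u₂ω₁ − u₁ω₂ + ∂₃B = 0. Then ω₂ = (u₂ω₁ + ∂₃B)/u₁ and ω₃ = (u₃ω₁ − ∂₂B)/u₁; moreover, substituting these expressions into the identity div(curl u) = 0 yields the transport equation (∂₁ + (u₂/u₁)∂₂ + (u₃/u₁)∂₃)ω₁ + (∂₂(u₂/u₁) + ∂₃(u₃/u₁))ω₁ + ∂₂(1/u₁)∂₃B − ∂₃(1/u₁)∂₂B = 0, provided u is C². -/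
noncomputable section

def pd1 (f : ℝ × ℝ × ℝ → ℝ) (x : ℝ × ℝ × ℝ) : ℝ :=
  deriv (fun t => f (t, x.2)) x.1

def pd2 (f : ℝ × ℝ × ℝ → ℝ) (x : ℝ × ℝ × ℝ) : ℝ :=
  deriv (fun t => f (x.1, t, x.2.2)) x.2.1

def pd3 (f : ℝ × ℝ × ℝ → ℝ) (x : ℝ × ℝ × ℝ) : ℝ :=
  deriv (fun t => f (x.1, x.2.1, t)) x.2.2

namespace Stmt9Aux

lemma line1 (x : ℝ × ℝ × ℝ) :
    HasDerivAt (fun t : ℝ => ((t, x.2) : ℝ × ℝ × ℝ)) (1, 0, 0) x.1 := by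
  exact HasDerivAt.prodMk (hasDerivAt_id x.1) (hasDerivAt_const x.1 x.2)

lemma line2 (x : ℝ × ℝ × ℝ) :
    HasDerivAt (fun t : ℝ => ((x.1, t, x.2.2) : ℝ × ℝ × ℝ)) (0, 1, 0) x.2.1 := by
  exact HasDerivAt.prodMk (hasDerivAt_const x.2.1 x.1)
    (HasDerivAt.prodMk (hasDerivAt_id x.2.1) (hasDerivAt_const x.2.1 x.2.2))

lemma line3 (x : ℝ × ℝ × ℝ) :
    HasDerivAt (fun t : ℝ => ((x.1, x.2.1, t) : ℝ × ℝ × ℝ)) (0, 0, 1) x.2.2 := by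
  exact HasDerivAt.prodMk (hasDerivAt_const x.2.2 x.1)
    (HasDerivAt.prodMk (hasDerivAt_const x.2.2 x.2.1) (hasDerivAt_id x.2.2))

variable {f : ℝ × ℝ × ℝ → ℝ} {L : ℝ × ℝ × ℝ →L[ℝ] ℝ} {x : ℝ × ℝ × ℝ}

lemma slice1 (hf : HasFDerivAt f L x) :
    HasDerivAt (fun t => f (t, x.2)) (L (1, 0, 0)) x.1 :=
  hf.comp_hasDerivAt x.1 (line1 x)

lemma slice2 (hf : HasFDerivAt f L x) :
    HasDerivAt (fun t => f (x.1, t, x.2.2)) (L (0, 1, 0)) x.2.1 :=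
  hf.comp_hasDerivAt x.2.1 (line2 x)

lemma slice3 (hf : HasFDerivAt f L x) :
    HasDerivAt (fun t => f (x.1, x.2.1, t)) (L (0, 0, 1)) x.2.2 :=
  hf.comp_hasDerivAt x.2.2 (line3 x)

lemma pd1_eq (hf : HasFDerivAt f L x) : pd1 f x = L (1, 0, 0) := (slice1 hf).deriv
lemma pd2_eq (hf : HasFDerivAt f L x) : pd2 f x = L (0, 1, 0) := (slice2 hf).deriv
lemma pd3_eq (hf : HasFDerivAt f L x) : pd3 f x = L (0, 0, 1) := (slice3 hf).deriv

lemma fderiv_slice {u : ℝ × ℝ × ℝ → ℝ} (hu : ContDiff ℝ 2 u) {γ : ℝ → ℝ × ℝ × ℝ}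
    {w : ℝ × ℝ × ℝ} {t : ℝ} (hγ : HasDerivAt γ w t) (v : ℝ × ℝ × ℝ) :
    HasDerivAt (fun s => fderiv ℝ u (γ s) v) (fderiv ℝ (fderiv ℝ u) (γ t) w v) t := by
  have h1 : ContDiff ℝ 1 (fderiv ℝ u) := hu.fderiv_right (by norm_num)
  have hF : HasFDerivAt (fderiv ℝ u) (fderiv ℝ (fderiv ℝ u) (γ t)) (γ t) :=
    (h1.differentiable one_ne_zero (γ t)).hasFDerivAt
  have hev : HasFDerivAt (fun y => fderiv ℝ u y v)
      ((ContinuousLinearMap.apply ℝ ℝ v).comp (fderiv ℝ (fderiv ℝ u) (γ t))) (γ t) :=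
    (ContinuousLinearMap.apply ℝ ℝ v).hasFDerivAt.comp (γ t) hF
  simpa [Function.comp_def] using hev.comp_hasDerivAt t hγ

lemma schwarz {u : ℝ × ℝ × ℝ → ℝ} (hu : ContDiff ℝ 2 u) (x : ℝ × ℝ × ℝ)
    (v w : ℝ × ℝ × ℝ) :
    fderiv ℝ (fderiv ℝ u) x v w = fderiv ℝ (fderiv ℝ u) x w v := by
  have h1 : ContDiff ℝ 1 (fderiv ℝ u) := hu.fderiv_right (by norm_num)
  exact second_derivative_symmetric
    (fun y => ((hu.differentiable (by norm_num)) y).hasFDerivAt)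
    ((h1.differentiable one_ne_zero x).hasFDerivAt) v w

lemma diff_fderiv_apply {u : ℝ × ℝ × ℝ → ℝ} (hu : ContDiff ℝ 2 u) (v : ℝ × ℝ × ℝ) :
    Differentiable ℝ (fun y => fderiv ℝ u y v) :=
  (ContinuousLinearMap.apply ℝ ℝ v).differentiable.comp
    ((hu.fderiv_right (m := 1) (by norm_num)).differentiable one_ne_zero)

end Stmt9Aux

set_option maxHeartbeats 1000000 in
open Stmt9Aux in
/-- Vorticity reduction in the deformation-curl decomposition: if
`u₁ω₃ - u₃ω₁ + ∂₂B = 0` and `u₂ω₁ - u₁ω₂ + ∂₃B = 0` with `u₁ > 0`, then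
`ω₂ = (u₂ω₁ + ∂₃B)/u₁`, `ω₃ = (u₃ω₁ - ∂₂B)/u₁`, and `div curl u = 0`
yields the transport equation for `ω₁`. -/
theorem stmt9 (u1 u2 u3 B : ℝ × ℝ × ℝ → ℝ)
    (hu1 : ContDiff ℝ 2 u1) (hu2 : ContDiff ℝ 2 u2) (hu3 : ContDiff ℝ 2 u3)
    (hB : ContDiff ℝ 1 B) (hpos : ∀ x, 0 < u1 x)
    (hrel1 : ∀ x, u1 x * (pd1 u2 x - pd2 u1 x) -
      u3 x * (pd2 u3 x - pd3 u2 x) + pd2 B x = 0)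
    (hrel2 : ∀ x, u2 x * (pd2 u3 x - pd3 u2 x) -
      u1 x * (pd3 u1 x - pd1 u3 x) + pd3 B x = 0) :
    (∀ x, pd3 u1 x - pd1 u3 x =
      (u2 x * (pd2 u3 x - pd3 u2 x) + pd3 B x) / u1 x) ∧
    (∀ x, pd1 u2 x - pd2 u1 x =
      (u3 x * (pd2 u3 x - pd3 u2 x) - pd2 B x) / u1 x) ∧
    (∀ x,
      pd1 (fun y => pd2 u3 y - pd3 u2 y) x +
        (u2 x / u1 x) * pd2 (fun y => pd2 u3 y - pd3 u2 y) x +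
        (u3 x / u1 x) * pd3 (fun y => pd2 u3 y - pd3 u2 y) x +
        (pd2 (fun y => u2 y / u1 y) x + pd3 (fun y => u3 y / u1 y) x) *
          (pd2 u3 x - pd3 u2 x) +
        pd2 (fun y => 1 / u1 y) x * pd3 B x -
        pd3 (fun y => 1 / u1 y) x * pd2 B x = 0) := by
  have d1 : Differentiable ℝ u1 := hu1.differentiable (by norm_num)
  have d2 : Differentiable ℝ u2 := hu2.differentiable (by norm_num)
  have d3 : Differentiable ℝ u3 := hu3.differentiable (by norm_num)
  have dB : Differentiable ℝ B := hB.differentiable one_ne_zero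
  refine ⟨fun x => ?_, fun x => ?_, fun x => ?_⟩
  · have h := hrel2 x
    have hne := (hpos x).ne'
    field_simp
    linarith
  · have h := hrel1 x
    have hne := (hpos x).ne'
    field_simp
    linarith
  · 
    have hne := (hpos x).ne'
    -- first derivatives as fderiv
    have hω : (fun y => pd2 u3 y - pd3 u2 y) =
        (fun y => fderiv ℝ u3 y (0,1,0) - fderiv ℝ u2 y (0,0,1)) :=
      funext fun y => by
        rw [pd2_eq (d3 y).hasFDerivAt, pd3_eq (d2 y).hasFDerivAt]
    -- second derivative abbreviations live implicitly
    have h11 : pd1 (fun y => pd2 u3 y - pd3 u2 y) x =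
        fderiv ℝ (fderiv ℝ u3) x (1,0,0) (0,1,0)
          - fderiv ℝ (fderiv ℝ u2) x (1,0,0) (0,0,1) := by
      rw [hω]
      exact ((fderiv_slice hu3 (line1 x) (0,1,0)).sub
        (fderiv_slice hu2 (line1 x) (0,0,1))).deriv
    have h12 : pd2 (fun y => pd2 u3 y - pd3 u2 y) x =
        fderiv ℝ (fderiv ℝ u3) x (0,1,0) (0,1,0)
          - fderiv ℝ (fderiv ℝ u2) x (0,1,0) (0,0,1) := by
      rw [hω]
      exact ((fderiv_slice hu3 (line2 x) (0,1,0)).sub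
        (fderiv_slice hu2 (line2 x) (0,0,1))).deriv
    have h13 : pd3 (fun y => pd2 u3 y - pd3 u2 y) x =
        fderiv ℝ (fderiv ℝ u3) x (0,0,1) (0,1,0)
          - fderiv ℝ (fderiv ℝ u2) x (0,0,1) (0,0,1) := by
      rw [hω]
      exact ((fderiv_slice hu3 (line3 x) (0,1,0)).sub
        (fderiv_slice hu2 (line3 x) (0,0,1))).deriv
    have hq2 : pd2 (fun y => u2 y / u1 y) x =
        (fderiv ℝ u2 x (0,1,0) * u1 x - u2 x * fderiv ℝ u1 x (0,1,0)) / (u1 x)^2 :=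
      ((slice2 (d2 x).hasFDerivAt).div (slice2 (d1 x).hasFDerivAt) hne).deriv
    have hq3 : pd3 (fun y => u3 y / u1 y) x =
        (fderiv ℝ u3 x (0,0,1) * u1 x - u3 x * fderiv ℝ u1 x (0,0,1)) / (u1 x)^2 :=
      ((slice3 (d3 x).hasFDerivAt).div (slice3 (d1 x).hasFDerivAt) hne).deriv
    have hi2 : pd2 (fun y => 1 / u1 y) x =
        (0 * u1 x - 1 * fderiv ℝ u1 x (0,1,0)) / (u1 x)^2 :=
      ((hasDerivAt_const x.2.1 (1:ℝ)).div (slice2 (d1 x).hasFDerivAt) hne).deriv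
    have hi3 : pd3 (fun y => 1 / u1 y) x =
        (0 * u1 x - 1 * fderiv ℝ u1 x (0,0,1)) / (u1 x)^2 :=
      ((hasDerivAt_const x.2.2 (1:ℝ)).div (slice3 (d1 x).hasFDerivAt) hne).deriv
    -- relations in fderiv form
    have hr1 : u1 x * (fderiv ℝ u2 x (1,0,0) - fderiv ℝ u1 x (0,1,0)) -
        u3 x * (fderiv ℝ u3 x (0,1,0) - fderiv ℝ u2 x (0,0,1)) + pd2 B x = 0 := by
      have h := hrel1 x
      rwa [pd1_eq (d2 x).hasFDerivAt, pd2_eq (d1 x).hasFDerivAt,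
        pd2_eq (d3 x).hasFDerivAt, pd3_eq (d2 x).hasFDerivAt] at h
    have hr2 : u2 x * (fderiv ℝ u3 x (0,1,0) - fderiv ℝ u2 x (0,0,1)) -
        u1 x * (fderiv ℝ u1 x (0,0,1) - fderiv ℝ u3 x (1,0,0)) + pd3 B x = 0 := by
      have h := hrel2 x
      rwa [pd3_eq (d1 x).hasFDerivAt, pd1_eq (d3 x).hasFDerivAt,
        pd2_eq (d3 x).hasFDerivAt, pd3_eq (d2 x).hasFDerivAt] at h
    -- P = ∂₃B, Q = ∂₂B as functions
    set P : ℝ × ℝ × ℝ → ℝ := fun y =>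
      u1 y * (fderiv ℝ u1 y (0,0,1) - fderiv ℝ u3 y (1,0,0)) -
        u2 y * (fderiv ℝ u3 y (0,1,0) - fderiv ℝ u2 y (0,0,1)) with hPdef
    set Q : ℝ × ℝ × ℝ → ℝ := fun y =>
      u3 y * (fderiv ℝ u3 y (0,1,0) - fderiv ℝ u2 y (0,0,1)) -
        u1 y * (fderiv ℝ u2 y (1,0,0) - fderiv ℝ u1 y (0,1,0)) with hQdef
    have hPB : ∀ y, pd3 B y = P y := by
      intro y
      have h := hrel2 y
      rw [pd3_eq (d1 y).hasFDerivAt, pd1_eq (d3 y).hasFDerivAt,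
        pd2_eq (d3 y).hasFDerivAt, pd3_eq (d2 y).hasFDerivAt] at h
      simp only [hPdef]
      linarith
    have hQB : ∀ y, pd2 B y = Q y := by
      intro y
      have h := hrel1 y
      rw [pd1_eq (d2 y).hasFDerivAt, pd2_eq (d1 y).hasFDerivAt,
        pd2_eq (d3 y).hasFDerivAt, pd3_eq (d2 y).hasFDerivAt] at h
      simp only [hQdef]
      linarith
    have dP : Differentiable ℝ P :=
      (d1.mul ((diff_fderiv_apply hu1 _).sub (diff_fderiv_apply hu3 _))).sub
        (d2.mul ((diff_fderiv_apply hu3 _).sub (diff_fderiv_apply hu2 _)))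
    have dQ : Differentiable ℝ Q :=
      (d3.mul ((diff_fderiv_apply hu3 _).sub (diff_fderiv_apply hu2 _))).sub
        (d1.mul ((diff_fderiv_apply hu2 _).sub (diff_fderiv_apply hu1 _)))
    -- the 2D slice of B
    set ι : ℝ × ℝ → ℝ × ℝ × ℝ := fun p => (x.1, p) with hιdef
    set J : ℝ × ℝ →L[ℝ] ℝ × ℝ × ℝ :=
      (0 : ℝ × ℝ →L[ℝ] ℝ).prod (ContinuousLinearMap.id ℝ (ℝ × ℝ)) with hJdef
    have hι : ∀ p : ℝ × ℝ, HasFDerivAt ι J p := fun p =>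
      HasFDerivAt.prodMk (hasFDerivAt_const x.1 p) (hasFDerivAt_id p)
    set Lfst := ContinuousLinearMap.fst ℝ ℝ ℝ with hLf
    set Lsnd := ContinuousLinearMap.snd ℝ ℝ ℝ with hLs
    set g' : ℝ × ℝ → (ℝ × ℝ →L[ℝ] ℝ) := fun p => Q (ι p) • Lfst + P (ι p) • Lsnd
      with hg'def
    have hg : ∀ p : ℝ × ℝ, HasFDerivAt (fun q => B (ι q)) (g' p) p := by
      intro p
      have h0 : HasFDerivAt (fun q => B (ι q)) ((fderiv ℝ B (ι p)).comp J) p :=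
        (dB (ι p)).hasFDerivAt.comp p (hι p)
      have heq : g' p = (fderiv ℝ B (ι p)).comp J := by
        refine ContinuousLinearMap.ext fun q => ?_
        have hq2' : fderiv ℝ B (ι p) (0,1,0) = Q (ι p) := by
          rw [← pd2_eq (dB (ι p)).hasFDerivAt]; exact hQB (ι p)
        have hq3' : fderiv ℝ B (ι p) (0,0,1) = P (ι p) := by
          rw [← pd3_eq (dB (ι p)).hasFDerivAt]; exact hPB (ι p)
        have hJq : J q = q.1 • ((0:ℝ),(1:ℝ),(0:ℝ)) + q.2 • ((0:ℝ),(0:ℝ),(1:ℝ)) := by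
          simp [hJdef, Prod.ext_iff]
        simp only [hg'def, ContinuousLinearMap.coe_comp', Function.comp_apply, hJq, map_add,
          map_smul, hq2', hq3', ContinuousLinearMap.add_apply,
          ContinuousLinearMap.smul_apply, hLf, hLs, ContinuousLinearMap.coe_fst',
          ContinuousLinearMap.coe_snd', smul_eq_mul, hPdef, hQdef]
        ring
      rw [heq]
      exact h0
    have hg'd : DifferentiableAt ℝ g' (x.2.1, x.2.2) := by
      have hιd : Differentiable ℝ ι := Differentiable.prodMk (differentiable_const x.1) differentiable_id
      exact (((dQ.comp hιd) (x.2.1, x.2.2)).smul_const Lfst).add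
        (((dP.comp hιd) (x.2.1, x.2.2)).smul_const Lsnd)
    have hg'' : HasFDerivAt g' (fderiv ℝ g' (x.2.1, x.2.2)) (x.2.1, x.2.2) :=
      hg'd.hasFDerivAt
    have hsym := second_derivative_symmetric hg hg'' ((1:ℝ),(0:ℝ)) ((0:ℝ),(1:ℝ))
    -- identify g'' (1,0) (0,1) with fderiv P x (0,1,0)
    have hx2 : ι (x.2.1, x.2.2) = x := rfl
    have hP' : fderiv ℝ g' (x.2.1, x.2.2) ((1:ℝ),(0:ℝ)) ((0:ℝ),(1:ℝ)) =
        fderiv ℝ P x (0,1,0) := by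
      have hA : HasFDerivAt (⇑(ContinuousLinearMap.apply ℝ ℝ ((0:ℝ),(1:ℝ))) ∘ g')
          ((ContinuousLinearMap.apply ℝ ℝ ((0:ℝ),(1:ℝ))).comp
            (fderiv ℝ g' (x.2.1, x.2.2))) (x.2.1, x.2.2) :=
        (ContinuousLinearMap.apply ℝ ℝ ((0:ℝ),(1:ℝ))).hasFDerivAt.comp _ hg''
      have hfun : ⇑(ContinuousLinearMap.apply ℝ ℝ ((0:ℝ),(1:ℝ))) ∘ g'
          = fun p => P (ι p) := by
        funext p
        simp [hg'def, hLf, hLs]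
      rw [hfun] at hA
      have hB' : HasFDerivAt (fun p => P (ι p)) ((fderiv ℝ P x).comp J) (x.2.1, x.2.2) :=
        by have h := (dP x).hasFDerivAt.comp (x.2.1, x.2.2) (hι (x.2.1, x.2.2)); exact h
      have := hA.unique hB'
      have h2 := congrArg (fun (M : ℝ × ℝ →L[ℝ] ℝ) => M ((1:ℝ),(0:ℝ))) this
      simpa [hJdef, Prod.ext_iff] using h2
    have hQ' : fderiv ℝ g' (x.2.1, x.2.2) ((0:ℝ),(1:ℝ)) ((1:ℝ),(0:ℝ)) =
        fderiv ℝ Q x (0,0,1) := by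
      have hA : HasFDerivAt (⇑(ContinuousLinearMap.apply ℝ ℝ ((1:ℝ),(0:ℝ))) ∘ g')
          ((ContinuousLinearMap.apply ℝ ℝ ((1:ℝ),(0:ℝ))).comp
            (fderiv ℝ g' (x.2.1, x.2.2))) (x.2.1, x.2.2) :=
        (ContinuousLinearMap.apply ℝ ℝ ((1:ℝ),(0:ℝ))).hasFDerivAt.comp _ hg''
      have hfun : ⇑(ContinuousLinearMap.apply ℝ ℝ ((1:ℝ),(0:ℝ))) ∘ g'
          = fun p => Q (ι p) := by
        funext p
        simp [hg'def, hLf, hLs]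
      rw [hfun] at hA
      have hB' : HasFDerivAt (fun p => Q (ι p)) ((fderiv ℝ Q x).comp J) (x.2.1, x.2.2) :=
        by have h := (dQ x).hasFDerivAt.comp (x.2.1, x.2.2) (hι (x.2.1, x.2.2)); exact h
      have := hA.unique hB'
      have h2 := congrArg (fun (M : ℝ × ℝ →L[ℝ] ℝ) => M ((0:ℝ),(1:ℝ))) this
      simpa [hJdef, Prod.ext_iff] using h2
    have hE0 : fderiv ℝ P x (0,1,0) = fderiv ℝ Q x (0,0,1) := by
      rw [← hP', ← hQ']; exact hsym
    -- expand fderiv P x (0,1,0)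
    have hPexp : fderiv ℝ P x (0,1,0) =
        fderiv ℝ u1 x (0,1,0) * (fderiv ℝ u1 x (0,0,1) - fderiv ℝ u3 x (1,0,0)) +
          u1 x * (fderiv ℝ (fderiv ℝ u1) x (0,1,0) (0,0,1)
            - fderiv ℝ (fderiv ℝ u3) x (0,1,0) (1,0,0)) -
        (fderiv ℝ u2 x (0,1,0) * (fderiv ℝ u3 x (0,1,0) - fderiv ℝ u2 x (0,0,1)) +
          u2 x * (fderiv ℝ (fderiv ℝ u3) x (0,1,0) (0,1,0)
            - fderiv ℝ (fderiv ℝ u2) x (0,1,0) (0,0,1))) := by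
      have hA : HasDerivAt (fun t => P (x.1, t, x.2.2)) (fderiv ℝ P x (0,1,0)) x.2.1 :=
        slice2 (dP x).hasFDerivAt
      have hBt : HasDerivAt (fun t => P (x.1, t, x.2.2))
          (fderiv ℝ u1 x (0,1,0) * (fderiv ℝ u1 x (0,0,1) - fderiv ℝ u3 x (1,0,0)) +
            u1 x * (fderiv ℝ (fderiv ℝ u1) x (0,1,0) (0,0,1)
              - fderiv ℝ (fderiv ℝ u3) x (0,1,0) (1,0,0)) -
          (fderiv ℝ u2 x (0,1,0) * (fderiv ℝ u3 x (0,1,0) - fderiv ℝ u2 x (0,0,1)) +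
            u2 x * (fderiv ℝ (fderiv ℝ u3) x (0,1,0) (0,1,0)
              - fderiv ℝ (fderiv ℝ u2) x (0,1,0) (0,0,1)))) x.2.1 :=
        ((slice2 (d1 x).hasFDerivAt).mul
            ((fderiv_slice hu1 (line2 x) (0,0,1)).sub
              (fderiv_slice hu3 (line2 x) (1,0,0)))).sub
          ((slice2 (d2 x).hasFDerivAt).mul
            ((fderiv_slice hu3 (line2 x) (0,1,0)).sub
              (fderiv_slice hu2 (line2 x) (0,0,1))))
      exact hA.unique hBt
    have hQexp : fderiv ℝ Q x (0,0,1) =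
        fderiv ℝ u3 x (0,0,1) * (fderiv ℝ u3 x (0,1,0) - fderiv ℝ u2 x (0,0,1)) +
          u3 x * (fderiv ℝ (fderiv ℝ u3) x (0,0,1) (0,1,0)
            - fderiv ℝ (fderiv ℝ u2) x (0,0,1) (0,0,1)) -
        (fderiv ℝ u1 x (0,0,1) * (fderiv ℝ u2 x (1,0,0) - fderiv ℝ u1 x (0,1,0)) +
          u1 x * (fderiv ℝ (fderiv ℝ u2) x (0,0,1) (1,0,0)
            - fderiv ℝ (fderiv ℝ u1) x (0,0,1) (0,1,0))) := by
      have hA : HasDerivAt (fun t => Q (x.1, x.2.1, t)) (fderiv ℝ Q x (0,0,1)) x.2.2 :=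
        slice3 (dQ x).hasFDerivAt
      have hBt : HasDerivAt (fun t => Q (x.1, x.2.1, t))
          (fderiv ℝ u3 x (0,0,1) * (fderiv ℝ u3 x (0,1,0) - fderiv ℝ u2 x (0,0,1)) +
            u3 x * (fderiv ℝ (fderiv ℝ u3) x (0,0,1) (0,1,0)
              - fderiv ℝ (fderiv ℝ u2) x (0,0,1) (0,0,1)) -
          (fderiv ℝ u1 x (0,0,1) * (fderiv ℝ u2 x (1,0,0) - fderiv ℝ u1 x (0,1,0)) +
            u1 x * (fderiv ℝ (fderiv ℝ u2) x (0,0,1) (1,0,0)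
              - fderiv ℝ (fderiv ℝ u1) x (0,0,1) (0,1,0)))) x.2.2 :=
        ((slice3 (d3 x).hasFDerivAt).mul
            ((fderiv_slice hu3 (line3 x) (0,1,0)).sub
              (fderiv_slice hu2 (line3 x) (0,0,1)))).sub
          ((slice3 (d1 x).hasFDerivAt).mul
            ((fderiv_slice hu2 (line3 x) (1,0,0)).sub
              (fderiv_slice hu1 (line3 x) (0,1,0))))
      exact hA.unique hBt
    have hE : (fderiv ℝ u1 x (0,1,0) * (fderiv ℝ u1 x (0,0,1) - fderiv ℝ u3 x (1,0,0)) +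
          u1 x * (fderiv ℝ (fderiv ℝ u1) x (0,1,0) (0,0,1)
            - fderiv ℝ (fderiv ℝ u3) x (0,1,0) (1,0,0)) -
        (fderiv ℝ u2 x (0,1,0) * (fderiv ℝ u3 x (0,1,0) - fderiv ℝ u2 x (0,0,1)) +
          u2 x * (fderiv ℝ (fderiv ℝ u3) x (0,1,0) (0,1,0)
            - fderiv ℝ (fderiv ℝ u2) x (0,1,0) (0,0,1)))) =
        (fderiv ℝ u3 x (0,0,1) * (fderiv ℝ u3 x (0,1,0) - fderiv ℝ u2 x (0,0,1)) +
          u3 x * (fderiv ℝ (fderiv ℝ u3) x (0,0,1) (0,1,0)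
            - fderiv ℝ (fderiv ℝ u2) x (0,0,1) (0,0,1)) -
        (fderiv ℝ u1 x (0,0,1) * (fderiv ℝ u2 x (1,0,0) - fderiv ℝ u1 x (0,1,0)) +
          u1 x * (fderiv ℝ (fderiv ℝ u2) x (0,0,1) (1,0,0)
            - fderiv ℝ (fderiv ℝ u1) x (0,0,1) (0,1,0)))) := by
      rw [← hPexp, ← hQexp]; exact hE0
    have hs1 := schwarz hu1 x (0,1,0) (0,0,1)
    have hs2 := schwarz hu2 x (0,0,1) (1,0,0)
    have hs3 := schwarz hu3 x (1,0,0) (0,1,0)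
    rw [h11, h12, h13, hq2, hq3, hi2, hi3,
      pd2_eq (d3 x).hasFDerivAt, pd3_eq (d2 x).hasFDerivAt]
    clear hω hPB hQB dP dQ hι hg hg'd hg'' hsym hP' hQ' hE0 hPexp hQexp hPdef hQdef
      hg'def hJdef hιdef hLf hLs hrel1 hrel2 hpos
    set a1 := u1 x
    set a2 := u2 x
    set a3 := u3 x
    set b2 := pd2 B x
    set b3 := pd3 B x
    set D11 := fderiv ℝ u1 x (1,0,0)
    set D12 := fderiv ℝ u1 x (0,1,0)
    set D13 := fderiv ℝ u1 x (0,0,1)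
    set D21 := fderiv ℝ u2 x (1,0,0)
    set D22 := fderiv ℝ u2 x (0,1,0)
    set D23 := fderiv ℝ u2 x (0,0,1)
    set D31 := fderiv ℝ u3 x (1,0,0)
    set D32 := fderiv ℝ u3 x (0,1,0)
    set D33 := fderiv ℝ u3 x (0,0,1)
    set S112 := fderiv ℝ (fderiv ℝ u1) x (0,1,0) (0,0,1)
    set S121 := fderiv ℝ (fderiv ℝ u1) x (0,0,1) (0,1,0)
    set S212 := fderiv ℝ (fderiv ℝ u2) x (0,0,1) (1,0,0)
    set S221 := fderiv ℝ (fderiv ℝ u2) x (1,0,0) (0,0,1)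
    set S222 := fderiv ℝ (fderiv ℝ u2) x (0,1,0) (0,0,1)
    set S233 := fderiv ℝ (fderiv ℝ u2) x (0,0,1) (0,0,1)
    set S312 := fderiv ℝ (fderiv ℝ u3) x (0,1,0) (1,0,0)
    set S321 := fderiv ℝ (fderiv ℝ u3) x (1,0,0) (0,1,0)
    set S322 := fderiv ℝ (fderiv ℝ u3) x (0,1,0) (0,1,0)
    set S333 := fderiv ℝ (fderiv ℝ u3) x (0,0,1) (0,1,0)
    field_simp
    linear_combination ((-(a1)) * hE + D13 * hr1 - D12 * hr2 +
      a1^2 * hs1 + a1^2 * hs2 + a1^2 * hs3)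

end
end

section
/- Let u = (u₁,u₂,u₃) and ρ > 0 be C¹ on a domain, with sound speed c² = γρ^{γ−1} and Bernoulli quantity B = |u|²/2 + γρ^{γ−1}/(γ−1) − Φ. If B is constant along streamlines (u·∇B = 0) and ρ = ρ(B,|u|²,Φ) as in the Bernoulli inversion, then the continuity equation div(ρu) = 0 is equivalent to the deformation equation Σᵢ (c² − uᵢ²) ∂ᵢuᵢ = u₁(u₂∂₁u₂ + u₃∂₁u₃ − ∂₁Φ) + u₂(u₁∂₂u₁ + u₃∂₂u₃ − ∂₂Φ) + u₃(u₁∂₃u₁ + u₂∂₃u₂ − ∂₃Φ). -/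
noncomputable section

lemma hd1 (f : ℝ × ℝ × ℝ → ℝ) (hf : ContDiff ℝ 1 f) (a b c : ℝ) :
    HasDerivAt (fun t => f (t, b, c)) (pd1 f (a, b, c)) a := by
  have hdiff : DifferentiableAt ℝ (fun t => f (t, b, c)) a := by
    exact ((hf.differentiable one_ne_zero) (a, b, c)).comp a
      (differentiableAt_id.prodMk (differentiableAt_const _))
  exact hdiff.hasDerivAt

lemma hd2 (f : ℝ × ℝ × ℝ → ℝ) (hf : ContDiff ℝ 1 f) (a b c : ℝ) :
    HasDerivAt (fun t => f (a, t, c)) (pd2 f (a, b, c)) b := by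
  have hdiff : DifferentiableAt ℝ (fun t => f (a, t, c)) b := by
    exact ((hf.differentiable one_ne_zero) (a, b, c)).comp b
      ((differentiableAt_const _).prodMk
        (differentiableAt_id.prodMk (differentiableAt_const _)))
  exact hdiff.hasDerivAt

lemma hd3 (f : ℝ × ℝ × ℝ → ℝ) (hf : ContDiff ℝ 1 f) (a b c : ℝ) :
    HasDerivAt (fun t => f (a, b, t)) (pd3 f (a, b, c)) c := by
  have hdiff : DifferentiableAt ℝ (fun t => f (a, b, t)) c := by
    exact ((hf.differentiable one_ne_zero) (a, b, c)).comp c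
      ((differentiableAt_const _).prodMk
        ((differentiableAt_const _).prodMk differentiableAt_id))
  exact hdiff.hasDerivAt

/-- The deformation equation: with `c² = γρ^(γ-1)`,
`B = |u|²/2 + γρ^(γ-1)/(γ-1) - Φ` and `u·∇B = 0`, the continuity equation
`div(ρu) = 0` is equivalent to
`Σᵢ (c² - uᵢ²)∂ᵢuᵢ = u₁(u₂∂₁u₂ + u₃∂₁u₃ - ∂₁Φ) + u₂(…) + u₃(…)`. -/
theorem stmt15 (γ : ℝ) (hγ : 1 < γ)
    (u1 u2 u3 Φ ρ B : ℝ × ℝ × ℝ → ℝ)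
    (hu1 : ContDiff ℝ 1 u1) (hu2 : ContDiff ℝ 1 u2) (hu3 : ContDiff ℝ 1 u3)
    (hΦ : ContDiff ℝ 1 Φ) (hρ : ContDiff ℝ 1 ρ)
    (hρpos : ∀ x, 0 < ρ x)
    (hBdef : ∀ x, B x = ((u1 x) ^ 2 + (u2 x) ^ 2 + (u3 x) ^ 2) / 2 +
      γ / (γ - 1) * ρ x ^ (γ - 1) - Φ x)
    (hBtrans : ∀ x,
      u1 x * pd1 B x + u2 x * pd2 B x + u3 x * pd3 B x = 0) :
    ∀ x,
      (pd1 (fun y => ρ y * u1 y) x + pd2 (fun y => ρ y * u2 y) x +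
          pd3 (fun y => ρ y * u3 y) x = 0) ↔
      ((γ * ρ x ^ (γ - 1) - (u1 x) ^ 2) * pd1 u1 x +
          (γ * ρ x ^ (γ - 1) - (u2 x) ^ 2) * pd2 u2 x +
          (γ * ρ x ^ (γ - 1) - (u3 x) ^ 2) * pd3 u3 x =
        u1 x * (u2 x * pd1 u2 x + u3 x * pd1 u3 x - pd1 Φ x) +
          u2 x * (u1 x * pd2 u1 x + u3 x * pd2 u3 x - pd2 Φ x) +
          u3 x * (u1 x * pd3 u1 x + u2 x * pd3 u2 x - pd3 Φ x)) := by
  have hBfun : B = fun x => ((u1 x) ^ 2 + (u2 x) ^ 2 + (u3 x) ^ 2) / 2 +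
      γ / (γ - 1) * ρ x ^ (γ - 1) - Φ x := funext hBdef
  have hγ1 : γ - 1 ≠ 0 := by linarith
  rintro ⟨a, b, c⟩
  set p : ℝ × ℝ × ℝ := (a, b, c) with hp
  -- derivatives along coordinate lines
  have Hu11 := hd1 u1 hu1 a b c
  have Hu21 := hd1 u2 hu2 a b c
  have Hu31 := hd1 u3 hu3 a b c
  have Hρ1 := hd1 ρ hρ a b c
  have HΦ1 := hd1 Φ hΦ a b c
  have Hu12 := hd2 u1 hu1 a b c
  have Hu22 := hd2 u2 hu2 a b c
  have Hu32 := hd2 u3 hu3 a b c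
  have Hρ2 := hd2 ρ hρ a b c
  have HΦ2 := hd2 Φ hΦ a b c
  have Hu13 := hd3 u1 hu1 a b c
  have Hu23 := hd3 u2 hu2 a b c
  have Hu33 := hd3 u3 hu3 a b c
  have Hρ3 := hd3 ρ hρ a b c
  have HΦ3 := hd3 Φ hΦ a b c
  have hρne : ρ p ≠ 0 := (hρpos p).ne'
  -- products
  have P1 : pd1 (fun y => ρ y * u1 y) p = pd1 ρ p * u1 p + ρ p * pd1 u1 p :=
    (Hρ1.mul Hu11).deriv
  have P2 : pd2 (fun y => ρ y * u2 y) p = pd2 ρ p * u2 p + ρ p * pd2 u2 p :=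
    (Hρ2.mul Hu22).deriv
  have P3 : pd3 (fun y => ρ y * u3 y) p = pd3 ρ p * u3 p + ρ p * pd3 u3 p :=
    (Hρ3.mul Hu33).deriv
  -- derivative of B
  have hγ2 : γ - 1 - 1 = γ - 2 := by ring
  have QB1 : pd1 B p = u1 p * pd1 u1 p + u2 p * pd1 u2 p + u3 p * pd1 u3 p +
      γ * ρ p ^ (γ - 2) * pd1 ρ p - pd1 Φ p := by
    rw [hBfun]
    have h := ((((((Hu11.pow 2).add (Hu21.pow 2)).add (Hu31.pow 2)).div_const 2).add
      ((Hρ1.rpow_const (p := γ - 1) (Or.inl hρne)).const_mul (γ / (γ - 1)))).sub HΦ1).deriv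
    rw [show pd1 (fun x => ((u1 x) ^ 2 + (u2 x) ^ 2 + (u3 x) ^ 2) / 2 +
        γ / (γ - 1) * ρ x ^ (γ - 1) - Φ x) p = _ from h, hγ2]
    field_simp
    ring
  have QB2 : pd2 B p = u1 p * pd2 u1 p + u2 p * pd2 u2 p + u3 p * pd2 u3 p +
      γ * ρ p ^ (γ - 2) * pd2 ρ p - pd2 Φ p := by
    rw [hBfun]
    have h := ((((((Hu12.pow 2).add (Hu22.pow 2)).add (Hu32.pow 2)).div_const 2).add
      ((Hρ2.rpow_const (p := γ - 1) (Or.inl hρne)).const_mul (γ / (γ - 1)))).sub HΦ2).deriv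
    rw [show pd2 (fun x => ((u1 x) ^ 2 + (u2 x) ^ 2 + (u3 x) ^ 2) / 2 +
        γ / (γ - 1) * ρ x ^ (γ - 1) - Φ x) p = _ from h, hγ2]
    field_simp
    ring
  have QB3 : pd3 B p = u1 p * pd3 u1 p + u2 p * pd3 u2 p + u3 p * pd3 u3 p +
      γ * ρ p ^ (γ - 2) * pd3 ρ p - pd3 Φ p := by
    rw [hBfun]
    have h := ((((((Hu13.pow 2).add (Hu23.pow 2)).add (Hu33.pow 2)).div_const 2).add
      ((Hρ3.rpow_const (p := γ - 1) (Or.inl hρne)).const_mul (γ / (γ - 1)))).sub HΦ3).deriv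
    rw [show pd3 (fun x => ((u1 x) ^ 2 + (u2 x) ^ 2 + (u3 x) ^ 2) / 2 +
        γ / (γ - 1) * ρ x ^ (γ - 1) - Φ x) p = _ from h, hγ2]
    field_simp
    ring
  have hT := hBtrans p
  rw [QB1, QB2, QB3] at hT
  have hkey : ρ p ^ (γ - 2) * ρ p = ρ p ^ (γ - 1) := by
    rw [show γ - 1 = (γ - 2) + 1 by ring, Real.rpow_add_one hρne]
  have hkpos : (0:ℝ) < γ * ρ p ^ (γ - 2) :=
    mul_pos (by linarith) (Real.rpow_pos_of_pos (hρpos p) _)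
  rw [P1, P2, P3]
  constructor
  · intro hC
    linear_combination (γ * ρ p ^ (γ - 2)) * hC - hT -
      (γ * (pd1 u1 p + pd2 u2 p + pd3 u3 p)) * hkey
  · intro hG
    have h0 : (γ * ρ p ^ (γ - 2)) *
        ((pd1 ρ p * u1 p + ρ p * pd1 u1 p) + (pd2 ρ p * u2 p + ρ p * pd2 u2 p) +
          (pd3 ρ p * u3 p + ρ p * pd3 u3 p)) = 0 := by
      linear_combination hG + hT + (γ * (pd1 u1 p + pd2 u2 p + pd3 u3 p)) * hkey
    exact (mul_eq_zero.mp h0).resolve_left hkpos.ne'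

end
end

section
/- Let ū±, ρ̄± solve the 1-D steady isentropic Euler system with external force f̄ > 0 on [L_0,L_1]: (ρ̄ū)' = 0, ρ̄ūū' + (ρ̄^γ)' = ρ̄f̄, with ū⁻ supersonic ((ū⁻)² > γ(ρ̄⁻)^{γ−1}) and ū⁺ subsonic. For a shock at position s ∈ (L_0,L_1) connecting ū⁻(s),ρ̄⁻(s) to ū⁺(s),ρ̄⁺(s) by the Rankine–Hugoniot conditions ρ̄⁻ū⁻ = ρ̄⁺ū⁺ and ρ̄⁻(ū⁻)² + (ρ̄⁻)^γ = ρ̄⁺(ū⁺)² + (ρ̄⁺)^γ with the entropy condition (ρ̄⁺)^γ > (ρ̄⁻)^γ at s: the downstream pressure at the exit P̄⁺(L_1) is a strictly monotone (decreasing) function of the shock position s. Consequently the shock position is uniquely determined by the exit pressure P_e, for P_e in an open interval (P_1, P_0). -/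
/-!
Mass conservation and the first Rankine–Hugoniot condition give every branch the same mass flux
`m = ρu`, so a state is determined by its density and its momentum `ρu² + ρ^γ` is
`J(ρ) = m²/ρ + ρ^γ`, which is strictly increasing on subsonic densities. For shocks at `s < t`,
the momentum of the `s`-branch grows faster than the supersonic one on `[s, t]` (its density is
larger and `f > 0`), so at `t` it exceeds the momentum of the `t`-branch. On `[t, L₁]` the
momentum difference `D` of the two subsonic branches satisfies `D' = (R_s - R_t) f`, which has
the sign of `D`; hence `D` stays positive, and by monotonicity of `J` so does the difference of
the exit densities, hence of the exit pressures.
-/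

open Set

lemma eq_left_of_hasDerivAt_zero {F : ℝ → ℝ} {a b : ℝ}
    (h : ∀ x ∈ Icc a b, HasDerivAt F 0 x) : ∀ x ∈ Icc a b, F x = F a :=
  constant_of_has_deriv_right_zero (fun x hx => (h x hx).continuousAt.continuousWithinAt)
    (fun x hx => (h x (Ico_subset_Icc_self hx)).hasDerivWithinAt)

lemma strictMonoOn_Icc_of_hasDerivAt_pos {F F' : ℝ → ℝ} {a b : ℝ}
    (h : ∀ x ∈ Icc a b, HasDerivAt F (F' x) x) (hpos : ∀ x ∈ Ioo a b, 0 < F' x) :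
    StrictMonoOn F (Icc a b) := by
  refine strictMonoOn_of_hasDerivWithinAt_pos (f' := F') (convex_Icc a b)
    (fun x hx => (h x hx).continuousAt.continuousWithinAt) (fun x hx => ?_) ?_
  · rw [interior_Icc] at hx ⊢
    exact (h x (Ioo_subset_Icc_self hx)).hasDerivWithinAt
  · simpa only [interior_Icc] using hpos

/-- Compare `D` with the constant `D a`: wherever `D` comes back to the value `D a > 0`, it is
strictly increasing. -/
lemma pos_of_hasDerivAt_pos_of_pos {D D' : ℝ → ℝ} {a b : ℝ}
    (hD : ∀ x ∈ Icc a b, HasDerivAt D (D' x) x) (ha : 0 < D a)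
    (hD' : ∀ x ∈ Ico a b, 0 < D x → 0 < D' x) : ∀ x ∈ Icc a b, 0 < D x := by
  intro x hx
  have hle : D a ≤ D x :=
    image_le_of_deriv_right_lt_deriv_boundary' continuousOn_const
      (fun _ _ => hasDerivWithinAt_const _ _ _) le_rfl
      (fun y hy => (hD y hy).continuousAt.continuousWithinAt)
      (fun y hy => (hD y (Ico_subset_Icc_self hy)).hasDerivWithinAt)
      (fun y hy hDy => hD' y hy (hDy ▸ ha)) hx
  linarith

lemma rpow_add_one_eq_sq_mul_rpow_sub_one {ρ : ℝ} (hρ : 0 < ρ) (γ : ℝ) :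
    ρ ^ (γ + 1) = ρ ^ 2 * ρ ^ (γ - 1) := by
  rw [← Real.rpow_natCast, ← Real.rpow_add hρ]
  ring_nf

/-- The momentum `ρu² + ρ^γ` of a state of density `ρ` and mass flux `m = ρu`. -/
noncomputable def momentumFlux (m γ ρ : ℝ) : ℝ := m ^ 2 * ρ⁻¹ + ρ ^ γ

/-- Densities at which the state of mass flux `m` is subsonic, `u² < γ ρ^(γ-1)` with `u = m/ρ`. -/
def subsonicDensities (m γ : ℝ) : Set ℝ := {ρ | 0 < ρ ∧ m ^ 2 < γ * ρ ^ (γ + 1)}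

def supersonicDensities (m γ : ℝ) : Set ℝ := {ρ | 0 < ρ ∧ γ * ρ ^ (γ + 1) < m ^ 2}

lemma mul_sq_add_rpow_eq_momentumFlux {ρ : ℝ} (hρ : ρ ≠ 0) (u γ : ℝ) :
    ρ * u ^ 2 + ρ ^ γ = momentumFlux (ρ * u) γ ρ := by
  have hsq : (ρ * u) ^ 2 = ρ * u ^ 2 * ρ := by ring
  rw [momentumFlux, hsq, mul_inv_cancel_right₀ hρ]

lemma mem_subsonicDensities_iff {ρ : ℝ} (hρ : 0 < ρ) (u γ : ℝ) :
    ρ ∈ subsonicDensities (ρ * u) γ ↔ u ^ 2 < γ * ρ ^ (γ - 1) := by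
  have hρ2 : 0 < ρ ^ 2 := by positivity
  simp only [subsonicDensities, mem_ofPred_eq, hρ, true_and,
    rpow_add_one_eq_sq_mul_rpow_sub_one hρ, mul_pow]
  rw [mul_left_comm, mul_lt_mul_iff_right₀ hρ2]

lemma mem_supersonicDensities_iff {ρ : ℝ} (hρ : 0 < ρ) (u γ : ℝ) :
    ρ ∈ supersonicDensities (ρ * u) γ ↔ γ * ρ ^ (γ - 1) < u ^ 2 := by
  have hρ2 : 0 < ρ ^ 2 := by positivity
  simp only [supersonicDensities, mem_ofPred_eq, hρ, true_and,
    rpow_add_one_eq_sq_mul_rpow_sub_one hρ, mul_pow]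
  rw [mul_left_comm, mul_lt_mul_iff_right₀ hρ2]

section SonicDensities

variable {m γ : ℝ}

lemma supersonic_lt_subsonic (hγ : 0 < γ) {ρ ρ' : ℝ} (hρ : ρ ∈ supersonicDensities m γ)
    (hρ' : ρ' ∈ subsonicDensities m γ) : ρ < ρ' := by
  by_contra! hle
  have := Real.rpow_le_rpow hρ'.1.le hle (by linarith : 0 ≤ γ + 1)
  nlinarith [hρ.2, hρ'.2]

lemma momentumFlux_strictMonoOn_Ici {a : ℝ} (hγ : 0 < γ) (ha : a ∈ subsonicDensities m γ) :
    StrictMonoOn (momentumFlux m γ) (Ici a) := by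
  have hderiv : ∀ ρ ∈ Ici a, HasDerivAt (momentumFlux m γ)
      (m ^ 2 * -(ρ ^ 2)⁻¹ + γ * ρ ^ (γ - 1)) ρ := fun ρ hρ => by
    have hρ : 0 < ρ := ha.1.trans_le hρ
    exact ((hasDerivAt_inv hρ.ne').const_mul _).add (Real.hasDerivAt_rpow_const (.inl hρ.ne'))
  refine strictMonoOn_of_hasDerivWithinAt_pos (convex_Ici a)
    (fun ρ hρ => (hderiv ρ hρ).continuousAt.continuousWithinAt)
    (fun ρ hρ => (hderiv ρ (interior_subset hρ)).hasDerivWithinAt) fun ρ hρ => ?_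
  rw [interior_Ici] at hρ
  have hρ0 : 0 < ρ := ha.1.trans hρ
  have hsub : m ^ 2 < γ * (ρ ^ 2 * ρ ^ (γ - 1)) := by
    rw [← rpow_add_one_eq_sq_mul_rpow_sub_one hρ0]
    exact ha.2.trans_le (by gcongr; exacts [ha.1.le, hρ.le])
  have hρ2 : 0 < ρ ^ 2 := by positivity
  have hkinetic : m ^ 2 * (ρ ^ 2)⁻¹ < γ * ρ ^ (γ - 1) := by
    rw [← div_eq_mul_inv, div_lt_iff₀ hρ2]
    linarith
  linarith

lemma momentumFlux_strictMonoOn (hγ : 0 < γ) :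
    StrictMonoOn (momentumFlux m γ) (subsonicDensities m γ) := fun _ ha _ _ hab =>
  momentumFlux_strictMonoOn_Ici hγ ha self_mem_Ici hab.le hab

end SonicDensities

section Comparison

variable {γ m : ℝ} {f : ℝ → ℝ}

lemma subsonic_density_lt_of_momentum_lt (hγ : 0 < γ) {a b : ℝ} {R₁ R₂ W₁ W₂ : ℝ → ℝ}
    (hf : ∀ x ∈ Icc a b, 0 < f x)
    (hW₁ : ∀ x ∈ Icc a b, HasDerivAt W₁ (R₁ x * f x) x)
    (hW₂ : ∀ x ∈ Icc a b, HasDerivAt W₂ (R₂ x * f x) x)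
    (hJ₁ : ∀ x ∈ Icc a b, W₁ x = momentumFlux m γ (R₁ x))
    (hJ₂ : ∀ x ∈ Icc a b, W₂ x = momentumFlux m γ (R₂ x))
    (hsub₁ : ∀ x ∈ Icc a b, R₁ x ∈ subsonicDensities m γ)
    (hsub₂ : ∀ x ∈ Icc a b, R₂ x ∈ subsonicDensities m γ)
    (ha : W₂ a < W₁ a) : ∀ x ∈ Icc a b, R₂ x < R₁ x := by
  have hlt_iff : ∀ x ∈ Icc a b, 0 < W₁ x - W₂ x ↔ R₂ x < R₁ x := fun x hx => by
    rw [sub_pos, hJ₁ x hx, hJ₂ x hx]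
    exact (momentumFlux_strictMonoOn hγ).lt_iff_lt (hsub₂ x hx) (hsub₁ x hx)
  refine fun x hx => (hlt_iff x hx).1 ?_
  refine pos_of_hasDerivAt_pos_of_pos (fun y hy => (hW₁ y hy).sub (hW₂ y hy))
    (sub_pos.2 ha) (fun y hy hDy => ?_) x hx
  have hy := Ico_subset_Icc_self hy
  rw [← sub_mul]
  exact mul_pos (sub_pos.2 ((hlt_iff y hy).1 hDy)) (hf y hy)

/-- `ρ, W` are the density and momentum of the supersonic flow, `Rₛ, Wₛ` (resp. `Rₜ, Wₜ`) those
of the subsonic flow behind a shock at `s` (resp. `t`). -/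
lemma exit_density_lt_of_shock_lt (hγ : 0 < γ) {s t b : ℝ} {ρ W Rₛ Wₛ Rₜ Wₜ : ℝ → ℝ}
    (hst : s < t) (htb : t ≤ b) (hf : ∀ x ∈ Icc s b, 0 < f x)
    (hW : ∀ x ∈ Icc s t, HasDerivAt W (ρ x * f x) x)
    (hWₛ : ∀ x ∈ Icc s b, HasDerivAt Wₛ (Rₛ x * f x) x)
    (hWₜ : ∀ x ∈ Icc t b, HasDerivAt Wₜ (Rₜ x * f x) x)
    (hJₛ : ∀ x ∈ Icc s b, Wₛ x = momentumFlux m γ (Rₛ x))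
    (hJₜ : ∀ x ∈ Icc t b, Wₜ x = momentumFlux m γ (Rₜ x))
    (hsup : ∀ x ∈ Icc s t, ρ x ∈ supersonicDensities m γ)
    (hsubₛ : ∀ x ∈ Icc s b, Rₛ x ∈ subsonicDensities m γ)
    (hsubₜ : ∀ x ∈ Icc t b, Rₜ x ∈ subsonicDensities m γ)
    (hRHₛ : Wₛ s = W s) (hRHₜ : Wₜ t = W t) : Rₜ b < Rₛ b := by
  have hsb : Icc s t ⊆ Icc s b := Icc_subset_Icc_right htb
  have htb' : Icc t b ⊆ Icc s b := Icc_subset_Icc_left hst.le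
  have hgain : StrictMonoOn (fun x => Wₛ x - W x) (Icc s t) := by
    refine strictMonoOn_Icc_of_hasDerivAt_pos (fun x hx => (hWₛ x (hsb hx)).sub (hW x hx))
      fun x hx => ?_
    have hx := Ioo_subset_Icc_self hx
    rw [← sub_mul]
    exact mul_pos (sub_pos.2 (supersonic_lt_subsonic hγ (hsup x hx) (hsubₛ x (hsb hx))))
      (hf x (hsb hx))
  have hjump : Wₜ t < Wₛ t := by
    have hgain_st := hgain ⟨le_rfl, hst.le⟩ ⟨hst.le, le_rfl⟩ hst
    simp only [hRHₛ, sub_self] at hgain_st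
    linarith
  exact subsonic_density_lt_of_momentum_lt hγ (fun x hx => hf x (htb' hx))
    (fun x hx => hWₛ x (htb' hx)) hWₜ (fun x hx => hJₛ x (htb' hx)) hJₜ
    (fun x hx => hsubₛ x (htb' hx)) hsubₜ hjump b ⟨htb, le_rfl⟩

end Comparison

theorem stmt17_general (L0 L1 γ : ℝ) (hγ : 1 < γ)
    (f : ℝ → ℝ) (hf : ∀ x ∈ Icc L0 L1, 0 < f x)
    (um ρm : ℝ → ℝ)
    (hρm : ∀ x ∈ Icc L0 L1, 0 < ρm x)
    (hmass_m : ∀ x ∈ Icc L0 L1, HasDerivAt (fun t => ρm t * um t) 0 x)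
    (hmom_m : ∀ x ∈ Icc L0 L1,
      HasDerivAt (fun t => ρm t * (um t) ^ 2 + ρm t ^ γ) (ρm x * f x) x)
    (hsup : ∀ x ∈ Icc L0 L1, γ * ρm x ^ (γ - 1) < (um x) ^ 2)
    (U R : ℝ → ℝ → ℝ)
    (hpos : ∀ s ∈ Ioo L0 L1, ∀ x ∈ Icc s L1, 0 < R s x ∧ 0 < U s x)
    (hmass : ∀ s ∈ Ioo L0 L1, ∀ x ∈ Icc s L1,
      HasDerivAt (fun t => R s t * U s t) 0 x)
    (hmom : ∀ s ∈ Ioo L0 L1, ∀ x ∈ Icc s L1,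
      HasDerivAt (fun t => R s t * (U s t) ^ 2 + R s t ^ γ) (R s x * f x) x)
    (hsub : ∀ s ∈ Ioo L0 L1, ∀ x ∈ Icc s L1,
      (U s x) ^ 2 < γ * R s x ^ (γ - 1))
    (hRH1 : ∀ s ∈ Ioo L0 L1, ρm s * um s = R s s * U s s)
    (hRH2 : ∀ s ∈ Ioo L0 L1,
      ρm s * (um s) ^ 2 + ρm s ^ γ = R s s * (U s s) ^ 2 + R s s ^ γ) :
    StrictAntiOn (fun s => R s L1 ^ γ) (Ioo L0 L1) ∧
    ∀ s ∈ Ioo L0 L1, ∀ t ∈ Ioo L0 L1,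
      R s L1 ^ γ = R t L1 ^ γ → s = t := by
  have hγ0 : 0 < γ := by linarith
  set m := ρm L0 * um L0
  have hfluxm : ∀ x ∈ Icc L0 L1, ρm x * um x = m := eq_left_of_hasDerivAt_zero hmass_m
  have hflux : ∀ s ∈ Ioo L0 L1, ∀ x ∈ Icc s L1, R s x * U s x = m := fun s hs x hx => by
    rw [eq_left_of_hasDerivAt_zero (hmass s hs) x hx, ← hRH1 s hs,
      hfluxm s (Ioo_subset_Icc_self hs)]
  have hJ : ∀ s ∈ Ioo L0 L1, ∀ x ∈ Icc s L1,
      R s x * U s x ^ 2 + R s x ^ γ = momentumFlux m γ (R s x) := fun s hs x hx => by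
    rw [← hflux s hs x hx]
    exact mul_sq_add_rpow_eq_momentumFlux (hpos s hs x hx).1.ne' _ _
  have hsubR : ∀ s ∈ Ioo L0 L1, ∀ x ∈ Icc s L1, R s x ∈ subsonicDensities m γ :=
    fun s hs x hx => by
      rw [← hflux s hs x hx]
      exact (mem_subsonicDensities_iff (hpos s hs x hx).1 _ _).2 (hsub s hs x hx)
  have hsupρ : ∀ x ∈ Icc L0 L1, ρm x ∈ supersonicDensities m γ := fun x hx => by
    rw [← hfluxm x hx]
    exact (mem_supersonicDensities_iff (hρm x hx) _ _).2 (hsup x hx)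
  have hexit : StrictAntiOn (fun s => R s L1) (Ioo L0 L1) := fun s hs t ht hst =>
    have hst_sub : Icc s t ⊆ Icc L0 L1 := Icc_subset_Icc hs.1.le ht.2.le
    exit_density_lt_of_shock_lt hγ0 hst ht.2.le
      (fun x hx => hf x (Icc_subset_Icc_left hs.1.le hx)) (fun x hx => hmom_m x (hst_sub hx))
      (hmom s hs) (hmom t ht) (hJ s hs) (hJ t ht) (fun x hx => hsupρ x (hst_sub hx))
      (hsubR s hs) (hsubR t ht) (hRH2 s hs).symm (hRH2 t ht).symm
  have hpressure : StrictAntiOn (fun s => R s L1 ^ γ) (Ioo L0 L1) := fun s hs t ht hst =>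
    Real.rpow_lt_rpow (hpos t ht L1 ⟨ht.2.le, le_rfl⟩).1.le (hexit hs ht hst) hγ0
  exact ⟨hpressure, fun s hs t ht h => hpressure.injOn hs ht h⟩

/-- Monotonicity of the exit pressure with respect to the shock position for
the 1-D transonic shock with positive external force: if for each
`s ∈ (L₀,L₁)` the subsonic downstream branch `(U s, R s)` solves the steady
Euler system on `[s, L₁]` and is connected to the supersonic branch
`(um, ρm)` at `s` by the Rankine–Hugoniot and entropy conditions, then
`s ↦ P̄⁺(L₁) = (R s L₁)^γ` is strictly decreasing; consequently the shock
position is uniquely determined by the exit pressure. -/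
theorem stmt17 (L0 L1 γ : ℝ) (hL : L0 < L1) (hγ : 1 < γ)
    (f : ℝ → ℝ) (hf : ∀ x ∈ Icc L0 L1, 0 < f x)
    (um ρm : ℝ → ℝ)
    (hρm : ∀ x ∈ Icc L0 L1, 0 < ρm x) (hum : ∀ x ∈ Icc L0 L1, 0 < um x)
    (hmass_m : ∀ x ∈ Icc L0 L1, HasDerivAt (fun t => ρm t * um t) 0 x)
    (hmom_m : ∀ x ∈ Icc L0 L1,
      HasDerivAt (fun t => ρm t * (um t) ^ 2 + ρm t ^ γ) (ρm x * f x) x)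
    (hsup : ∀ x ∈ Icc L0 L1, γ * ρm x ^ (γ - 1) < (um x) ^ 2)
    (U R : ℝ → ℝ → ℝ)
    (hpos : ∀ s ∈ Ioo L0 L1, ∀ x ∈ Icc s L1, 0 < R s x ∧ 0 < U s x)
    (hmass : ∀ s ∈ Ioo L0 L1, ∀ x ∈ Icc s L1,
      HasDerivAt (fun t => R s t * U s t) 0 x)
    (hmom : ∀ s ∈ Ioo L0 L1, ∀ x ∈ Icc s L1,
      HasDerivAt (fun t => R s t * (U s t) ^ 2 + R s t ^ γ) (R s x * f x) x)
    (hsub : ∀ s ∈ Ioo L0 L1, ∀ x ∈ Icc s L1,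
      (U s x) ^ 2 < γ * R s x ^ (γ - 1))
    (hRH1 : ∀ s ∈ Ioo L0 L1, ρm s * um s = R s s * U s s)
    (hRH2 : ∀ s ∈ Ioo L0 L1,
      ρm s * (um s) ^ 2 + ρm s ^ γ = R s s * (U s s) ^ 2 + R s s ^ γ)
    (hent : ∀ s ∈ Ioo L0 L1, ρm s ^ γ < R s s ^ γ) :
    StrictAntiOn (fun s => R s L1 ^ γ) (Ioo L0 L1) ∧
    ∀ s ∈ Ioo L0 L1, ∀ t ∈ Ioo L0 L1,
      R s L1 ^ γ = R t L1 ^ γ → s = t :=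
  stmt17_general L0 L1 γ hγ f hf um ρm hρm hmass_m hmom_m hsup U R hpos hmass hmom hsub hRH1 hRH2
end
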